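/- Let p ≥ 1, k ≥ 1, and let (a_0,…,a_{k−1}) ∈ ℕ^k be an admissible word. Then the cylinder [a_0…a_{k−1}] of the LSV map T_p is a nonempty order-connected subset of [0,1] (an interval) with nonempty interior. Moreover, if a_{k−1} = 0, then for all 0 ≤ n ≤ q ≤ ∞, the set [a_0…a_{k−1}] ∩ T_p^{-k}([c_{q+1}, c_n]) (with the convention that [c_{q+1}, c_n] := [0, c_n] when q = ∞) is also a nonempty order-connected subset of [0,1] with nonempty interior. -/
import Mathlib


open Set MeasureTheory

/-- The LSV map `T_p`. -/
noncomputable def lsvMap (p : ℝ) (x : ℝ) : ℝ :=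
  if x < 1 / 2 then x + 2 ^ p * x ^ (p + 1) else 2 * x - 1

/-- A word `(a_0, …, a_{k-1})` is admissible if `a_j = 0` or `a_{j+1} = a_j - 1`
for every `0 ≤ j ≤ k - 2`. -/
def lsvAdmissible {k : ℕ} (a : Fin k → ℕ) : Prop :=
  ∀ j : Fin k, ∀ h : j.val + 1 < k, a j = 0 ∨ a ⟨j.val + 1, h⟩ = a j - 1

/-- The cylinder `[a_0 … a_{k-1}] = {x ∈ [0,1] : T_p^j x ∈ [c_{a_j + 1}, c_{a_j}] ∀ j}`. -/
def lsvCylinder (p : ℝ) (c : ℕ → ℝ) {k : ℕ} (a : Fin k → ℕ) : Set ℝ :=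
  {x ∈ Icc (0 : ℝ) 1 | ∀ j : Fin k, (lsvMap p)^[j.val] x ∈ Icc (c (a j + 1)) (c (a j))}

section aux

variable {p : ℝ}

lemma hgmono (hp : 1 ≤ p) {x y : ℝ} (hx : 0 ≤ x) (hxy : x ≤ y) :
    x + 2 ^ p * x ^ (p + 1) ≤ y + 2 ^ p * y ^ (p + 1) := by
  have h2 : (0:ℝ) < 2 ^ p := Real.rpow_pos_of_pos (by norm_num) p
  have h := Real.rpow_le_rpow hx hxy (by linarith : (0:ℝ) ≤ p + 1)
  nlinarith

lemma hgstrict (hp : 1 ≤ p) {x y : ℝ} (hx : 0 ≤ x) (hxy : x < y) :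
    x + 2 ^ p * x ^ (p + 1) < y + 2 ^ p * y ^ (p + 1) := by
  have h2 : (0:ℝ) < 2 ^ p := Real.rpow_pos_of_pos (by norm_num) p
  have h := Real.rpow_le_rpow hx hxy.le (by linarith : (0:ℝ) ≤ p + 1)
  nlinarith

lemma ghalf (hp : 1 ≤ p) : (1/2 : ℝ) + 2 ^ p * (1/2 : ℝ) ^ (p + 1) = 1 := by
  have e1 : ((1:ℝ)/2) ^ (p+1) = ((2:ℝ) ^ (p+1))⁻¹ := by
    rw [one_div, ← Real.inv_rpow (by norm_num : (0:ℝ) ≤ 2)]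
  have e2 : (2:ℝ) ^ (p+1) = 2 ^ p * 2 := by
    rw [Real.rpow_add (by norm_num : (0:ℝ) < 2), Real.rpow_one]
  have h2 : (0:ℝ) < 2 ^ p := Real.rpow_pos_of_pos (by norm_num) p
  rw [e1, e2]
  field_simp
  ring

end aux

section aux2

variable {p : ℝ} {ginv : ℝ → ℝ} {c : ℕ → ℝ}
variable (hp : 1 ≤ p)
variable (hginv : ∀ x ∈ Icc (0 : ℝ) 1,
    ginv x ∈ Icc (0 : ℝ) (1 / 2) ∧ ginv x + 2 ^ p * (ginv x) ^ (p + 1) = x)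
variable (hc0 : c 0 = 1) (hcs : ∀ n, c (n + 1) = ginv (c n))

include hp hginv hc0 hcs

lemma hcmem : ∀ n, c n ∈ Icc (0:ℝ) 1 := by
  intro n
  induction n with
  | zero => rw [hc0]; constructor <;> norm_num
  | succ n ih =>
    rw [hcs]
    have h := (hginv (c n) ih).1
    exact ⟨h.1, le_trans h.2 (by norm_num)⟩

lemma hchalf : ∀ n, c (n+1) ≤ 1/2 := by
  intro n; rw [hcs]; exact (hginv (c n) (hcmem hp hginv hc0 hcs n)).1.2

lemma hgc : ∀ n, c (n+1) + 2^p * (c (n+1))^(p+1) = c n := by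
  intro n; rw [hcs]; exact (hginv (c n) (hcmem hp hginv hc0 hcs n)).2

lemma hcpos : ∀ n, 0 < c n := by
  intro n
  induction n with
  | zero => rw [hc0]; norm_num
  | succ n ih =>
    have h0 : 0 ≤ c (n+1) := (hcmem hp hginv hc0 hcs (n+1)).1
    rcases h0.lt_or_eq with h | h
    · exact h
    · exfalso
      have hg := hgc hp hginv hc0 hcs n
      rw [← h, Real.zero_rpow (by linarith)] at hg
      simp at hg
      linarith

lemma hclt : ∀ n, c (n+1) < c n := by
  intro n
  have hg := hgc hp hginv hc0 hcs n
  have hpos : 0 < (c (n+1))^(p+1) :=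
    Real.rpow_pos_of_pos (hcpos hp hginv hc0 hcs (n+1)) _
  have h2 : (0:ℝ) < 2 ^ p := Real.rpow_pos_of_pos (by norm_num) p
  nlinarith

lemma hanti : Antitone c :=
  antitone_nat_of_succ_le (fun n => (hclt hp hginv hc0 hcs n).le)

lemma hginv_lt : ∀ u v, u ∈ Icc (0:ℝ) 1 → v ∈ Icc (0:ℝ) 1 → u < v → ginv u < ginv v := by
  intro u v hu hv huv
  by_contra hcon
  push_neg at hcon
  have h1 := hginv u hu
  have h2 := hginv v hv
  have := hgmono hp h2.1.1 hcon
  rw [h2.2, h1.2] at this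
  linarith

lemma hginv_le : ∀ u v, u ∈ Icc (0:ℝ) 1 → v ∈ Icc (0:ℝ) 1 → u ≤ v → ginv u ≤ ginv v := by
  intro u v hu hv huv
  by_contra hcon
  push_neg at hcon
  have h1 := hginv u hu
  have h2 := hginv v hv
  have := hgstrict hp h2.1.1 hcon
  rw [h2.2, h1.2] at this
  linarith

lemma hc1 : c 1 = 1/2 := by
  have hy := (hginv 1 (by constructor <;> norm_num)).1
  have hgy : ginv 1 + 2^p * (ginv 1)^(p+1) = 1 := (hginv 1 (by constructor <;> norm_num)).2
  have hc1' : c 1 = ginv 1 := by rw [hcs, hc0]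
  rw [hc1']
  rcases lt_or_eq_of_le hy.2 with h | h
  · exfalso
    have := hgstrict hp hy.1 h
    rw [hgy, ghalf hp] at this
    exact lt_irrefl _ this
  · exact h

end aux2

section aux3

variable {p : ℝ} {c : ℕ → ℝ}

lemma hmem_cyl (p : ℝ) (c : ℕ → ℝ) {k : ℕ} (a : Fin k → ℕ) (x : ℝ) :
    x ∈ lsvCylinder p c a ↔
      x ∈ Icc (0:ℝ) 1 ∧ ∀ j : Fin k, (lsvMap p)^[j.val] x ∈ Icc (c (a j + 1)) (c (a j)) :=
  Iff.rfl

lemma hcyl_succ (hc01 : ∀ n, c n ∈ Icc (0:ℝ) 1) {k : ℕ} (a : Fin (k+2) → ℕ) (x : ℝ) :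
    x ∈ lsvCylinder p c a ↔
      x ∈ Icc (0:ℝ) 1 ∧ x ∈ Icc (c (a 0 + 1)) (c (a 0)) ∧
        lsvMap p x ∈ lsvCylinder p c (fun j : Fin (k+1) => a j.succ) := by
  rw [hmem_cyl, hmem_cyl]
  constructor
  · rintro ⟨hx01, hj⟩
    have h0 := hj 0
    simp only [Fin.val_zero, Function.iterate_zero, id_eq] at h0
    refine ⟨hx01, h0, ?_, ?_⟩
    · have h1 := hj 1
      simp only [Fin.val_one, Function.iterate_one] at h1
      exact ⟨le_trans (hc01 _).1 h1.1, le_trans h1.2 (hc01 _).2⟩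
    · intro i
      have h := hj i.succ
      rw [Fin.val_succ, Function.iterate_succ_apply] at h
      exact h
  · rintro ⟨hx01, h0, hT01, hj⟩
    refine ⟨hx01, ?_⟩
    intro j
    induction j using Fin.cases with
    | zero => simpa using h0
    | succ i =>
      simp only [Fin.val_succ, Function.iterate_succ_apply]
      exact hj i

lemma hadm_tail {k : ℕ} (a : Fin (k+2) → ℕ) (ha : lsvAdmissible a) :
    lsvAdmissible (fun j : Fin (k+1) => a j.succ) := by
  intro j hj
  have h' : (j.val + 1) + 1 < k + 2 := by omega
  have key := ha ⟨j.val + 1, by omega⟩ h'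
  have e1 : j.succ = (⟨j.val + 1, by omega⟩ : Fin (k+2)) := by ext; simp
  have e2 : (⟨j.val + 1, hj⟩ : Fin (k+1)).succ = (⟨j.val + 1 + 1, h'⟩ : Fin (k+2)) := by
    ext; simp
  show a j.succ = 0 ∨ a (⟨j.val + 1, hj⟩ : Fin (k+1)).succ = a j.succ - 1
  rw [e1, e2]
  exact key

lemma hfirst {k : ℕ} (a : Fin (k+2) → ℕ) (ha : lsvAdmissible a) (m : ℕ) (h0 : a 0 = m + 1) :
    a ((0 : Fin (k+1)).succ) = m := by
  have h01 : (0 : Fin (k+2)).val + 1 < k + 2 := by simp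
  rcases ha 0 h01 with h | h
  · rw [h0] at h; omega
  · have e : ((0 : Fin (k+1)).succ : Fin (k+2)) = ⟨(0 : Fin (k+2)).val + 1, h01⟩ := by
      ext; simp
    rw [e, h, h0]
    omega

end aux3

section aux4

variable {p : ℝ} {ginv : ℝ → ℝ} {c : ℕ → ℝ}
variable (hp : 1 ≤ p)
variable (hginv : ∀ x ∈ Icc (0 : ℝ) 1,
    ginv x ∈ Icc (0 : ℝ) (1 / 2) ∧ ginv x + 2 ^ p * (ginv x) ^ (p + 1) = x)
variable (hc0 : c 0 = 1) (hcs : ∀ n, c (n + 1) = ginv (c n))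

include hp hginv hc0 hcs

lemma lemA : ∀ (k : ℕ) (a : Fin (k+1) → ℕ), lsvAdmissible a → ∀ s t : ℝ,
    c (a (Fin.last k) + 1) ≤ s → s < t → t ≤ c (a (Fin.last k)) →
    ∃ u v : ℝ, u < v ∧ c (a 0 + 1) ≤ u ∧ v ≤ c (a 0) ∧
      Ioo u v ⊆ lsvCylinder p c a ∧ ∀ x ∈ Ioo u v, (lsvMap p)^[k] x ∈ Ioo s t := by
  have Hmem := hcmem hp hginv hc0 hcs
  have Hhalf := hchalf hp hginv hc0 hcs
  have Hc1 := hc1 hp hginv hc0 hcs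
  intro k
  induction k with
  | zero =>
    intro a _ s t hs hst ht
    have e : a 0 = a (Fin.last 0) := congrArg a (Fin.ext (by simp))
    refine ⟨s, t, hst, by rw [e]; exact hs, by rw [e]; exact ht, ?_, ?_⟩
    · intro x hx
      rw [hmem_cyl]
      have h1 : c (a (Fin.last 0) + 1) ≤ x := le_trans hs hx.1.le
      have h2 : x ≤ c (a (Fin.last 0)) := le_trans hx.2.le ht
      refine ⟨⟨le_trans (Hmem _).1 h1, le_trans h2 (Hmem _).2⟩, ?_⟩
      intro j
      have hj : j = 0 := Fin.ext (by omega)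
      subst hj
      simp only [Fin.val_zero, Function.iterate_zero, id_eq]
      rw [e]
      exact ⟨h1, h2⟩
    · intro x hx
      simpa using hx
  | succ k ih =>
    intro a ha s t hs hst ht
    set b : Fin (k+1) → ℕ := fun j => a j.succ with hb
    have hbadm := hadm_tail a ha
    have hlast : b (Fin.last k) = a (Fin.last (k+1)) := by
      show a ((Fin.last k).succ) = a (Fin.last (k+1))
      rw [Fin.succ_last]
    obtain ⟨u, v, huv, hu, hv, hsub, hiter⟩ :=
      ih b hbadm s t (by rw [hlast]; exact hs) hst (by rw [hlast]; exact ht)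
    have hu0 : 0 ≤ u := le_trans (Hmem _).1 hu
    have hv1 : v ≤ 1 := le_trans hv (Hmem _).2
    rcases Nat.eq_zero_or_pos (a 0) with h0 | hpos
    · -- a 0 = 0
      have ec1 : c (a 0 + 1) = 1/2 := by rw [h0]; exact Hc1
      have ec0 : c (a 0) = 1 := by rw [h0]; exact hc0
      have hTmem : ∀ x ∈ Ioo ((u+1)/2) ((v+1)/2), lsvMap p x ∈ Ioo u v := by
        intro x hx
        obtain ⟨hxl, hxr⟩ := hx
        have hTx : lsvMap p x = 2*x - 1 := if_neg (by push_neg; linarith)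
        rw [hTx]
        constructor <;> linarith
      refine ⟨(u+1)/2, (v+1)/2, by linarith, by rw [ec1]; linarith, by rw [ec0]; linarith,
        ?_, ?_⟩
      · intro x hx
        obtain ⟨hxl, hxr⟩ := hx
        rw [hcyl_succ Hmem]
        refine ⟨⟨by linarith, by linarith⟩, ?_, hsub (hTmem x ⟨hxl, hxr⟩)⟩
        rw [ec1, ec0]
        exact ⟨by linarith, by linarith⟩
      · intro x hx
        rw [Function.iterate_succ_apply]
        exact hiter _ (hTmem x hx)
    · -- a 0 = m + 1
      obtain ⟨m, h0⟩ : ∃ m, a 0 = m + 1 := ⟨a 0 - 1, by omega⟩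
      have hb0 : b 0 = m := hfirst a ha m h0
      have hum : c (m+1) ≤ u := by rw [hb0] at hu; exact hu
      have hvm : v ≤ c m := by rw [hb0] at hv; exact hv
      have humem : u ∈ Icc (0:ℝ) 1 := ⟨hu0, hv1.trans' huv.le⟩
      have hvmem : v ∈ Icc (0:ℝ) 1 := ⟨by linarith, hv1⟩
      have hguv : ginv u < ginv v := hginv_lt hp hginv hc0 hcs u v humem hvmem huv
      have hgu0 : 0 ≤ ginv u := (hginv u humem).1.1
      have hgvhalf : ginv v ≤ 1/2 := (hginv v hvmem).1.2
      have hq1 : c (a 0 + 1) ≤ ginv u := by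
        have e : c (a 0 + 1) = ginv (c (m+1)) := by rw [h0]; exact hcs (m+1)
        rw [e]
        exact hginv_le hp hginv hc0 hcs _ _ (Hmem _) humem hum
      have hq2 : ginv v ≤ c (a 0) := by
        have e : c (a 0) = ginv (c m) := by rw [h0]; exact hcs m
        rw [e]
        exact hginv_le hp hginv hc0 hcs _ _ hvmem (Hmem _) hvm
      have hca0 : 0 ≤ c (a 0 + 1) := (Hmem _).1
      have hTmem : ∀ x ∈ Ioo (ginv u) (ginv v), lsvMap p x ∈ Ioo u v := by
        intro x hx
        obtain ⟨hxl, hxr⟩ := hx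
        have hTx : lsvMap p x = x + 2^p * x^(p+1) := if_pos (by linarith)
        have hTl : u < x + 2^p*x^(p+1) := by
          have h := hgstrict hp hgu0 hxl
          rwa [(hginv u humem).2] at h
        have hTr : x + 2^p*x^(p+1) < v := by
          have h := hgstrict hp (by linarith : (0:ℝ) ≤ x) hxr
          rwa [(hginv v hvmem).2] at h
        rw [hTx]
        exact ⟨hTl, hTr⟩
      refine ⟨ginv u, ginv v, hguv, hq1, hq2, ?_, ?_⟩
      · intro x hx
        obtain ⟨hxl, hxr⟩ := hx
        rw [hcyl_succ Hmem]
        exact ⟨⟨by linarith, by linarith⟩, ⟨by linarith, by linarith⟩,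
          hsub (hTmem x ⟨hxl, hxr⟩)⟩
      · intro x hx
        rw [Function.iterate_succ_apply]
        exact hiter _ (hTmem x hx)

end aux4

section aux5

variable {p : ℝ} {ginv : ℝ → ℝ} {c : ℕ → ℝ}
variable (hp : 1 ≤ p)
variable (hginv : ∀ x ∈ Icc (0 : ℝ) 1,
    ginv x ∈ Icc (0 : ℝ) (1 / 2) ∧ ginv x + 2 ^ p * (ginv x) ^ (p + 1) = x)
variable (hc0 : c 0 = 1) (hcs : ∀ n, c (n + 1) = ginv (c n))

include hp hginv hc0 hcs

lemma lemB : ∀ (k : ℕ) (a : Fin (k+1) → ℕ), lsvAdmissible a → ∀ J : Set ℝ, J.OrdConnected →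
    (a (Fin.last k) = 0 ∨ J = univ) →
    (lsvCylinder p c a ∩ (lsvMap p)^[k+1] ⁻¹' J).OrdConnected := by
  have Hmem := hcmem hp hginv hc0 hcs
  have Hhalf := hchalf hp hginv hc0 hcs
  have Hc1 := hc1 hp hginv hc0 hcs
  have Hpos := hcpos hp hginv hc0 hcs
  intro k
  induction k with
  | zero =>
    intro a ha J hJ hdisj
    constructor
    intro x hx y hy z hz
    obtain ⟨hxc, hxJ⟩ := hx
    obtain ⟨hyc, hyJ⟩ := hy
    rw [hmem_cyl] at hxc hyc
    obtain ⟨hx01, hxj⟩ := hxc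
    obtain ⟨hy01, hyj⟩ := hyc
    have hx0 := hxj 0
    have hy0 := hyj 0
    simp only [Fin.val_zero, Function.iterate_zero, id_eq] at hx0 hy0
    obtain ⟨hzx, hzy⟩ := hz
    refine ⟨?_, ?_⟩
    · rw [hmem_cyl]
      refine ⟨⟨le_trans hx01.1 hzx, le_trans hzy hy01.2⟩, ?_⟩
      intro j
      have hj : j = 0 := Fin.ext (by omega)
      subst hj
      simp only [Fin.val_zero, Function.iterate_zero, id_eq]
      exact ⟨le_trans hx0.1 hzx, le_trans hzy hy0.2⟩
    · rcases hdisj with h0 | hJu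
      · have e : a 0 = 0 := by
          have e0 : (0 : Fin (0+1)) = Fin.last 0 := Fin.ext (by simp)
          rw [e0]; exact h0
        have exh : (1:ℝ)/2 ≤ x := by
          have := hx0.1
          rw [e] at this
          rw [Hc1] at this
          linarith
        have eyh : y ≤ 1 := by
          have := hy0.2
          rw [e, hc0] at this
          exact this
        have hTxJ : lsvMap p x ∈ J := hxJ
        have hTyJ : lsvMap p y ∈ J := hyJ
        have hTx : lsvMap p x = 2*x - 1 := if_neg (by push_neg; linarith)
        have hTy : lsvMap p y = 2*y - 1 := if_neg (by push_neg; linarith)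
        have hTz : lsvMap p z = 2*z - 1 := if_neg (by push_neg; linarith)
        show lsvMap p z ∈ J
        rw [hTx] at hTxJ
        rw [hTy] at hTyJ
        rw [hTz]
        exact hJ.out hTxJ hTyJ ⟨by linarith, by linarith⟩
      · subst hJu
        simp
  | succ k ih =>
    intro a ha J hJ hdisj
    set b : Fin (k+1) → ℕ := fun j => a j.succ with hb
    have hbadm := hadm_tail a ha
    have hlast : b (Fin.last k) = a (Fin.last (k+1)) := by
      show a ((Fin.last k).succ) = a (Fin.last (k+1))
      rw [Fin.succ_last]
    have hIH := ih b hbadm J hJ (by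
      rcases hdisj with h | h
      · exact Or.inl (hlast.trans h)
      · exact Or.inr h)
    constructor
    intro x hx y hy z hz
    obtain ⟨hxc, hxJ⟩ := hx
    obtain ⟨hyc, hyJ⟩ := hy
    rw [hcyl_succ Hmem] at hxc hyc
    obtain ⟨hx01, hx0, hxT⟩ := hxc
    obtain ⟨hy01, hy0, hyT⟩ := hyc
    obtain ⟨hzx, hzy⟩ := hz
    have hxS : lsvMap p x ∈ lsvCylinder p c b ∩ (lsvMap p)^[k+1] ⁻¹' J := ⟨hxT, hxJ⟩
    have hyS : lsvMap p y ∈ lsvCylinder p c b ∩ (lsvMap p)^[k+1] ⁻¹' J := ⟨hyT, hyJ⟩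
    have hmono : lsvMap p x ≤ lsvMap p z ∧ lsvMap p z ≤ lsvMap p y := by
      rcases Nat.eq_zero_or_pos (a 0) with h0 | hposa
      · have exh : (1:ℝ)/2 ≤ x := by
          have := hx0.1
          rw [h0, Hc1] at this
          linarith
        have hTx : lsvMap p x = 2*x - 1 := if_neg (by push_neg; linarith)
        have hTy : lsvMap p y = 2*y - 1 := if_neg (by push_neg; linarith)
        have hTz : lsvMap p z = 2*z - 1 := if_neg (by push_neg; linarith)
        rw [hTx, hTy, hTz]
        constructor <;> linarith
      · obtain ⟨m, h0⟩ : ∃ m, a 0 = m + 1 := ⟨a 0 - 1, by omega⟩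
        have hb0 : b 0 = m := hfirst a ha m h0
        have hTy0 : c (m+1) ≤ lsvMap p y := by
          have h := ((hmem_cyl p c b (lsvMap p y)).mp hyT).2 0
          simp only [Fin.val_zero, Function.iterate_zero, id_eq] at h
          rw [hb0] at h
          exact h.1
        have hyc1 : y ≤ c (m+1) := by
          have := hy0.2
          rwa [h0] at this
        have hyhalf : y ≤ 1/2 := le_trans hyc1 (Hhalf m)
        have hylt : y < 1/2 := by
          rcases lt_or_eq_of_le hyhalf with h | h
          · exact h
          · exfalso
            have hTy : lsvMap p y = 2*y - 1 := if_neg (by push_neg; linarith)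
            rw [hTy, h] at hTy0
            have := Hpos (m+1)
            linarith
        have hx00 : 0 ≤ x := le_trans (Hmem _).1 hx0.1
        have hTx : lsvMap p x = x + 2^p*x^(p+1) := if_pos (by linarith)
        have hTz : lsvMap p z = z + 2^p*z^(p+1) := if_pos (by linarith)
        have hTy : lsvMap p y = y + 2^p*y^(p+1) := if_pos (by linarith)
        rw [hTx, hTy, hTz]
        exact ⟨hgmono hp hx00 hzx, hgmono hp (by linarith) hzy⟩
    have hzS := hIH.out hxS hyS ⟨hmono.1, hmono.2⟩
    refine ⟨?_, ?_⟩
    · rw [hcyl_succ Hmem]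
      exact ⟨⟨le_trans hx01.1 hzx, le_trans hzy hy01.2⟩,
        ⟨le_trans hx0.1 hzx, le_trans hzy hy0.2⟩, hzS.1⟩
    · exact hzS.2

end aux5

theorem stmt15 (p : ℝ) (hp : 1 ≤ p) (ginv : ℝ → ℝ)
    (hginv : ∀ x ∈ Icc (0 : ℝ) 1,
      ginv x ∈ Icc (0 : ℝ) (1 / 2) ∧ ginv x + 2 ^ p * (ginv x) ^ (p + 1) = x)
    (c : ℕ → ℝ) (hc0 : c 0 = 1) (hcs : ∀ n, c (n + 1) = ginv (c n))
    (k : ℕ) (hk : 1 ≤ k) (a : Fin k → ℕ) (ha : lsvAdmissible a) :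
    ((lsvCylinder p c a).Nonempty ∧ (lsvCylinder p c a).OrdConnected ∧
      (interior (lsvCylinder p c a)).Nonempty) ∧
    (a ⟨k - 1, by omega⟩ = 0 → ∀ (n : ℕ) (q : ℕ∞), (n : ℕ∞) ≤ q →
      (lsvCylinder p c a ∩
        (lsvMap p)^[k] ⁻¹' Icc (if q = ⊤ then 0 else c (q.toNat + 1)) (c n)).Nonempty ∧
      (lsvCylinder p c a ∩
        (lsvMap p)^[k] ⁻¹' Icc (if q = ⊤ then 0 else c (q.toNat + 1)) (c n)).OrdConnected ∧
      (interior (lsvCylinder p c a ∩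
        (lsvMap p)^[k] ⁻¹' Icc (if q = ⊤ then 0 else c (q.toNat + 1)) (c n))).Nonempty) := by
  have Hmem := hcmem hp hginv hc0 hcs
  have Hc1 := hc1 hp hginv hc0 hcs
  have Hpos := hcpos hp hginv hc0 hcs
  have Hlt := hclt hp hginv hc0 hcs
  have Hanti := hanti hp hginv hc0 hcs
  obtain ⟨m, rfl⟩ : ∃ m, k = m + 1 := ⟨k - 1, by omega⟩
  constructor
  · obtain ⟨u, v, huv, hu, hv, hsub, hiter⟩ :=
      lemA hp hginv hc0 hcs m a ha _ _ le_rfl (Hlt (a (Fin.last m))) le_rfl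
    refine ⟨⟨(u+v)/2, hsub ⟨by linarith, by linarith⟩⟩, ?_,
      ⟨(u+v)/2, interior_maximal hsub isOpen_Ioo ⟨by linarith, by linarith⟩⟩⟩
    have hB := lemB hp hginv hc0 hcs m a ha univ ordConnected_univ (Or.inr rfl)
    simpa using hB
  · intro h0 n q hnq
    have h0' : a (Fin.last m) = 0 := h0
    set l : ℝ := if q = ⊤ then 0 else c (q.toNat + 1) with hl
    have hl0 : 0 ≤ l := by
      rw [hl]
      split
      · exact le_refl 0
      · exact (Hmem _).1
    have hln : l ≤ c (n + 1) := by
      rw [hl]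
      split
      · exact (Hmem _).1
      · next hq =>
        have e := ENat.coe_toNat hq
        rw [← e] at hnq
        have hnq' : n ≤ q.toNat := by exact_mod_cast hnq
        exact Hanti (by omega)
    have hlc : l < c n := lt_of_le_of_lt hln (Hlt n)
    have hcn1 : c n ≤ 1 := (Hmem n).2
    have hs : c (a (Fin.last m) + 1) ≤ (l+1)/2 := by
      rw [h0', Hc1]; linarith
    have ht : (c n + 1)/2 ≤ c (a (Fin.last m)) := by
      rw [h0']
      rw [hc0]; linarith
    obtain ⟨u, v, huv, hu, hv, hsub, hiter⟩ :=
      lemA hp hginv hc0 hcs m a ha ((l+1)/2) ((c n + 1)/2) hs (by linarith) ht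
    have hsub2 : Ioo u v ⊆ lsvCylinder p c a ∩ (lsvMap p)^[m+1] ⁻¹' Icc l (c n) := by
      intro x hx
      refine ⟨hsub hx, ?_⟩
      have hit := hiter x hx
      have hTh : (lsvMap p)^[m+1] x = 2 * (lsvMap p)^[m] x - 1 := by
        rw [Function.iterate_succ_apply']
        exact if_neg (by push_neg; linarith [hit.1, hl0])
      show (lsvMap p)^[m+1] x ∈ Icc l (c n)
      rw [hTh]
      exact ⟨by linarith [hit.1], by linarith [hit.2]⟩
    refine ⟨⟨(u+v)/2, hsub2 ⟨by linarith, by linarith⟩⟩, ?_,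
      ⟨(u+v)/2, interior_maximal hsub2 isOpen_Ioo ⟨by linarith, by linarith⟩⟩⟩
    exact lemB hp hginv hc0 hcs m a ha (Icc l (c n)) ordConnected_Icc (Or.inl h0')
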